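/- Let n ≥ 2 and let A ∈ ℝ^{n×n} be a nonnegative weighted shift matrix: A_{i,i+1} = c_i ≥ 0 for i = 1,…,n−1 and all other entries 0. Then for all t ∈ [0,1], ρ((1−t)A + tAᵀ) = 2√(t(1−t)) · ρ((A + Aᵀ)/2). -/

import Mathlib

open Matrix

/-- The spectral radius of a real square matrix: the maximum modulus of its
(complex) eigenvalues. -/
noncomputable def specRad {m : Type*} [Fintype m] [DecidableEq m]
    (M : Matrix m m ℝ) : ℝ :=
  (spectralRadius ℂ (M.map (fun x : ℝ => (x : ℂ)))).toReal

/-- A square matrix is irreducible if its associated directed graph is strongly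
connected, i.e. for every pair of indices `i j` some power of the matrix has a
positive `(i,j)` entry. -/
def Irred {m : Type*} [Fintype m] [DecidableEq m] (M : Matrix m m ℝ) : Prop :=
  ∀ i j : m, ∃ k : ℕ, 0 < (M ^ (k + 1)) i j

/-!
Conjugating a weighted shift by `diag(r⁰, r¹, …, rⁿ⁻¹)` multiplies its superdiagonal by `r⁻¹`
and its subdiagonal by `r`. With `r = √(b/a)` this makes `a • A + b • Aᵀ` similar to
`√(ab) • (A + Aᵀ)` for `a, b > 0`; if `a` or `b` vanishes, the matrix is a multiple of the
nilpotent `A` or `Aᵀ`, whose spectral radius is `0 = √(ab) · ρ(A + Aᵀ)`.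
-/

open Polynomial in
theorem Matrix.IsUpperTriangular.isNilpotent_of_diag_eq_zero {R n : Type*} [CommRing R]
    [Fintype n] [DecidableEq n] [LinearOrder n] {M : Matrix n n R} (hM : M.IsUpperTriangular)
    (hdiag : M.diag = 0) : IsNilpotent M := by
  refine ⟨Fintype.card n, ?_⟩
  have hchar : M.charpoly = X ^ Fintype.card n := by
    simp [charpoly_of_isUpperTriangular M hM, show ∀ i, M i i = 0 from congrFun hdiag]
  simpa [hchar] using M.aeval_self_charpoly

section spectralRadius

variable {𝕜 A : Type*} [NormedField 𝕜] [Ring A] [Algebra 𝕜 A]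

theorem spectralRadius_eq_zero_of_isNilpotent {a : A} (ha : IsNilpotent a) :
    spectralRadius 𝕜 a = 0 := by
  nontriviality A
  obtain ⟨k, hk⟩ := ha
  refine le_antisymm (iSup₂_le fun x hx => ?_) zero_le
  have : x ^ k ∈ spectrum 𝕜 (0 : A) := hk ▸ spectrum.pow_mem_pow a k hx
  rw [spectrum.zero_eq, Set.mem_singleton_iff] at this
  have hk0 : k ≠ 0 := by rintro rfl; simp at hk
  simp [pow_eq_zero_iff hk0 |>.mp this]

theorem spectralRadius_smul (k : 𝕜) (a : A) :
    spectralRadius 𝕜 (k • a) = ‖k‖₊ * spectralRadius 𝕜 a := by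
  rcases eq_or_ne k 0 with rfl | hk
  · simp
  rw [spectralRadius, spectralRadius, ← Units.smul_mk0 hk, spectrum.unit_smul_eq_smul,
    ← Set.image_smul, iSup_image]
  simp_rw [Units.smul_def, smul_eq_mul, nnnorm_mul, ENNReal.coe_mul, ← ENNReal.mul_iSup]
  rfl

theorem spectralRadius_units_conj (u : Aˣ) (a : A) :
    spectralRadius 𝕜 (u * a * ↑u⁻¹ : A) = spectralRadius 𝕜 a := by
  rw [spectralRadius, spectralRadius, spectrum.units_conjugate]

end spectralRadius

section specRad

variable {m : Type*} [Fintype m] [DecidableEq m]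

theorem specRad_eq_zero_of_isNilpotent {M : Matrix m m ℝ} (hM : IsNilpotent M) :
    specRad M = 0 := by
  have hMC : IsNilpotent (M.map (fun x : ℝ => (x : ℂ))) := hM.map Complex.ofRealHom.mapMatrix
  rw [specRad, spectralRadius_eq_zero_of_isNilpotent hMC, ENNReal.toReal_zero]

theorem specRad_smul (c : ℝ) (M : Matrix m m ℝ) : specRad (c • M) = |c| * specRad M := by
  have hmap : (c • M).map (fun x : ℝ => (x : ℂ)) = (c : ℂ) • M.map (fun x : ℝ => (x : ℂ)) := by
    ext; simp
  rw [specRad, specRad, hmap, spectralRadius_smul, ENNReal.toReal_mul, ENNReal.coe_toReal,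
    coe_nnnorm, Complex.norm_real, Real.norm_eq_abs]

theorem specRad_units_conj (U : (Matrix m m ℝ)ˣ) (M : Matrix m m ℝ) :
    specRad ((U : Matrix m m ℝ) * M * ((U⁻¹ : (Matrix m m ℝ)ˣ) : Matrix m m ℝ)) =
      specRad M := by
  let f : Matrix m m ℝ →* Matrix m m ℂ := (Complex.ofRealHom.mapMatrix (m := m)).toMonoidHom
  let V := Units.map f U
  have hmap : f (U * M * ((U⁻¹ : (Matrix m m ℝ)ˣ) : Matrix m m ℝ)) =
      (V : Matrix m m ℂ) * f M * ((V⁻¹ : (Matrix m m ℂ)ˣ) : Matrix m m ℂ) := by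
    simp only [map_mul, V, Units.coe_map, Units.coe_map_inv]
  have hρ := spectralRadius_units_conj (𝕜 := ℂ) V (f M)
  rw [← hmap] at hρ
  exact congrArg ENNReal.toReal hρ

theorem specRad_diagonal_conj (d : m → ℝˣ) (M : Matrix m m ℝ) :
    specRad (diagonal (fun i => (d i : ℝ)) * M * diagonal (fun i => (((d i)⁻¹ : ℝˣ) : ℝ))) =
      specRad M :=
  specRad_units_conj (Units.map (diagonalRingHom m ℝ).toMonoidHom (MulEquiv.piUnits.symm d)) M

end specRad

def IsWeightedShift {R : Type*} [Zero R] {n : ℕ} (A : Matrix (Fin n) (Fin n) R) : Prop :=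
  ∀ i j : Fin n, (j : ℕ) ≠ i + 1 → A i j = 0

namespace IsWeightedShift

variable {n : ℕ}

theorem isNilpotent {R : Type*} [CommRing R] {A : Matrix (Fin n) (Fin n) R}
    (hA : IsWeightedShift A) : IsNilpotent A :=
  IsUpperTriangular.isNilpotent_of_diag_eq_zero
    (fun i j hji => hA i j (by simp only [id_eq, Fin.lt_def] at hji; omega))
    (funext fun i => hA i i (by omega))

theorem diagonal_pow_conj_smul_add_transpose {R : Type*} [CommRing R] {A : Matrix (Fin n) (Fin n) R}
    (hA : IsWeightedShift A) (u : Rˣ) (c : R) :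
    diagonal (fun i : Fin n => ((u ^ (i : ℕ) : Rˣ) : R)) * (c • (A + Aᵀ)) *
        diagonal (fun i : Fin n => (((u ^ (i : ℕ))⁻¹ : Rˣ) : R)) =
      (c * ↑u⁻¹) • A + (c * u) • Aᵀ := by
  ext i j
  simp only [diagonal_mul, mul_diagonal, Matrix.smul_apply, Matrix.add_apply, transpose_apply,
    smul_eq_mul]
  by_cases hij : (j : ℕ) = i + 1
  · rw [hA j i (by omega), hij, pow_succ, _root_.mul_inv_rev, Units.val_mul]
    linear_combination (c * A i j * ↑u⁻¹) * (u ^ (i : ℕ)).mul_inv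
  by_cases hji : (i : ℕ) = j + 1
  · rw [hA i j (by omega), hji, pow_succ, Units.val_mul]
    linear_combination (c * A j i * ↑u) * (u ^ (j : ℕ)).mul_inv
  simp [hA i j hij, hA j i hji]

theorem specRad_smul_add_smul_transpose {A : Matrix (Fin n) (Fin n) ℝ} (hA : IsWeightedShift A)
    {a b : ℝ} (ha : 0 ≤ a) (hb : 0 ≤ b) :
    specRad (a • A + b • Aᵀ) = √(a * b) * specRad (A + Aᵀ) := by
  rcases ha.eq_or_lt with rfl | ha
  · have hAt : IsNilpotent Aᵀ := isNilpotent_transpose_iff.2 hA.isNilpotent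
    simpa using specRad_eq_zero_of_isNilpotent (hAt.smul b)
  rcases hb.eq_or_lt with rfl | hb
  · simpa using specRad_eq_zero_of_isNilpotent (hA.isNilpotent.smul a)
  let u : ℝˣ := Units.mk0 (√b / √a) (by positivity)
  have hconj := hA.diagonal_pow_conj_smul_add_transpose u (√a * √b)
  have hua : √a * √b * ↑u⁻¹ = a := by
    simp only [u, Units.val_inv_eq_inv_val, Units.val_mk0]
    field_simp
    exact Real.sq_sqrt ha.le
  have hub : √a * √b * ↑u = b := by
    simp only [u, Units.val_mk0]
    field_simp
    exact Real.sq_sqrt hb.le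
  rw [hua, hub] at hconj
  rw [← hconj, specRad_diagonal_conj (fun i : Fin n => u ^ (i : ℕ)), specRad_smul,
    Real.sqrt_mul ha.le, abs_of_nonneg (by positivity)]

end IsWeightedShift

theorem specRad_levinger_weighted_shift_general {n : ℕ}
    (A : Matrix (Fin n) (Fin n) ℝ)
    (hshift : ∀ i j : Fin n, (j:ℕ) ≠ (i:ℕ) + 1 → A i j = 0) :
    ∀ t ∈ Set.Icc (0:ℝ) 1,
      specRad ((1 - t) • A + t • Aᵀ) =
        2 * Real.sqrt (t * (1 - t)) * specRad ((1/2 : ℝ) • (A + Aᵀ)) := by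
  rintro t ⟨ht₀, ht₁⟩
  have hA : IsWeightedShift A := hshift
  rw [hA.specRad_smul_add_smul_transpose (sub_nonneg.2 ht₁) ht₀, specRad_smul,
    abs_of_pos (by norm_num : (0 : ℝ) < 1 / 2), mul_comm (1 - t)]
  ring

/-- For a nonnegative weighted shift matrix `A` (nonzero entries only on the
superdiagonal), the spectral radius of the Levinger homotopy satisfies
`ρ((1−t)A + tAᵀ) = 2√(t(1−t)) · ρ((A + Aᵀ)/2)` for all `t ∈ [0,1]`. -/
theorem specRad_levinger_weighted_shift {n : ℕ} (hn : 2 ≤ n)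
    (A : Matrix (Fin n) (Fin n) ℝ)
    (hshift : ∀ i j : Fin n, (j:ℕ) ≠ (i:ℕ) + 1 → A i j = 0)
    (hnn : ∀ i j, 0 ≤ A i j) :
    ∀ t ∈ Set.Icc (0:ℝ) 1,
      specRad ((1 - t) • A + t • Aᵀ) =
        2 * Real.sqrt (t * (1 - t)) * specRad ((1/2 : ℝ) • (A + Aᵀ)) :=
  specRad_levinger_weighted_shift_general A hshift
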